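/- Let F be an endofunctor on Set and L a lax F-lifting. Then for every relation R : X ⇸ Y and all functions f : X' → X and g : Y' → Y, one has L (gr(f) ; R ; (gr(g))°) = gr(F f) ; (L R) ; (gr(F g))°. -/

import Mathlib

universe u v

open CategoryTheory

namespace Rel

/-- The inverse relation (as in the older Mathlib's `Rel.inv`). -/
def inv {α β : Type*} (R : Rel α β) : Rel β α := flip R

/-- Relational composition (as in the older Mathlib's `Rel.comp`). -/
def comp {α β γ : Type*} (r : Rel α β) (s : Rel β γ) : Rel α γ := fun x z => ∃ y, r x y ∧ s y z

end Rel

/-- The graph of a function, as a relation. -/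
def gr {X Y : Type u} (f : X → Y) : Rel X Y := fun x y => f x = y

/-- A lax lifting of an endofunctor `F` on `Set` to relations: monotone, laxly
functorial, and laxly extending graphs and converse graphs. -/
structure LaxLifting (F : Type u ⥤ Type u) : Type (u + 1) where
  map : ∀ {X Y : Type u}, Rel X Y → Rel (F.obj X) (F.obj Y)
  mono : ∀ {X Y : Type u} {R S : Rel X Y}, R ≤ S → map R ≤ map S
  laxComp : ∀ {X Y Z : Type u} (R : Rel X Y) (S : Rel Y Z),
    (map R).comp (map S) ≤ map (R.comp S)
  graph_le : ∀ {X Y : Type u} (f : X → Y), gr ⇑(F.map (TypeCat.ofHom f)) ≤ map (gr f)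
  graphInv_le : ∀ {X Y : Type u} (f : X → Y), (gr ⇑(F.map (TypeCat.ofHom f))).inv ≤ map (gr f).inv

/-- Pointwise order on lax liftings. -/
def LiftLE {F : Type u ⥤ Type u} (L L' : LaxLifting F) : Prop :=
  ∀ (X Y : Type u) (R : Rel X Y), L.map R ≤ L'.map R

/-
Functions are maps in the allegory of relations: `gr h` is left adjoint to `(gr h)°`, so
`A ⊆ gr h ; B ; (gr k)°` holds exactly when `(gr h)° ; A ; gr k ⊆ B`. Lax preservation of
graphs, converse graphs and composition gives `gr(F f) ; L R ; (gr(F g))° ⊆ L (gr f ; R ; (gr g)°)`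
directly. For the converse, by the adjunction it suffices to bound
`(gr(F f))° ; L (gr f ; R ; (gr g)°) ; gr(F g)`, which the same lax laws put inside
`L ((gr f)° ; gr f ; R ; (gr g)° ; gr g) ⊆ L R`.
-/
namespace Rel

variable {α β γ : Type*}

theorem comp_mono_left {A A' : Rel α β} (h : A ≤ A') (B : Rel β γ) : A.comp B ≤ A'.comp B :=
  fun _ _ ⟨y, hA, hB⟩ => ⟨y, h _ _ hA, hB⟩

theorem comp_mono_right (A : Rel α β) {B B' : Rel β γ} (h : B ≤ B') : A.comp B ≤ A.comp B' :=
  fun _ _ ⟨y, hA, hB⟩ => ⟨y, hA, h _ _ hB⟩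

end Rel

theorem le_gr_comp_comp_grInv_iff {X X' Y Y' : Type u} (h : X' → X) (k : Y' → Y)
    (A : Rel X' Y') (B : Rel X Y) :
    A ≤ (gr h).comp (B.comp (gr k).inv) ↔ (gr h).inv.comp (A.comp (gr k)) ≤ B := by
  constructor
  · rintro hA x y ⟨x', rfl, y', hxy, rfl⟩
    obtain ⟨_, rfl, _, hB, rfl⟩ := hA x' y' hxy
    exact hB
  · exact fun hB x' y' hxy => ⟨h x', rfl, k y', hB _ _ ⟨x', rfl, y', hxy, rfl⟩, rfl⟩

namespace LaxLifting

variable {F : Type u ⥤ Type u} (L : LaxLifting F) {X Y Z : Type u}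

theorem comp_map_le_map_comp {A : Rel (F.obj X) (F.obj Y)} {A' : Rel X Y} (h : A ≤ L.map A')
    (S : Rel Y Z) : A.comp (L.map S) ≤ L.map (A'.comp S) :=
  (Rel.comp_mono_left h _).trans (L.laxComp A' S)

theorem map_comp_le_map_comp {B : Rel (F.obj Y) (F.obj Z)} {B' : Rel Y Z} (h : B ≤ L.map B')
    (S : Rel X Y) : (L.map S).comp B ≤ L.map (S.comp B') :=
  (Rel.comp_mono_right _ h).trans (L.laxComp S B')

end LaxLifting

/-- A lax lifting strictly preserves cospans of graphs around a relation. -/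
theorem lifting_cospan (F : Type u ⥤ Type u) (L : LaxLifting F)
    (X Y X' Y' : Type u) (R : Rel X Y) (f : X' → X) (g : Y' → Y) :
    L.map ((gr f).comp (R.comp (gr g).inv)) =
      (gr ⇑(F.map (TypeCat.ofHom f))).comp ((L.map R).comp (gr ⇑(F.map (TypeCat.ofHom g))).inv) := by
  set T := (gr f).comp (R.comp (gr g).inv)
  apply le_antisymm
  · rw [le_gr_comp_comp_grInv_iff]
    calc (gr ⇑(F.map (TypeCat.ofHom f))).inv.comp ((L.map T).comp (gr ⇑(F.map (TypeCat.ofHom g))))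
        ≤ (gr ⇑(F.map (TypeCat.ofHom f))).inv.comp (L.map (T.comp (gr g))) :=
          Rel.comp_mono_right _ (L.map_comp_le_map_comp (L.graph_le g) T)
      _ ≤ L.map ((gr f).inv.comp (T.comp (gr g))) :=
          L.comp_map_le_map_comp (L.graphInv_le f) _
      _ ≤ L.map R := L.mono ((le_gr_comp_comp_grInv_iff f g T R).1 le_rfl)
  · calc (gr ⇑(F.map (TypeCat.ofHom f))).comp
          ((L.map R).comp (gr ⇑(F.map (TypeCat.ofHom g))).inv)
        ≤ (gr ⇑(F.map (TypeCat.ofHom f))).comp (L.map (R.comp (gr g).inv)) :=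
          Rel.comp_mono_right _ (L.map_comp_le_map_comp (L.graphInv_le g) R)
      _ ≤ L.map T := L.comp_map_le_map_comp (L.graph_le f) _
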